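/- arXiv:1211.5692 — 2 statements merged into one kernel-verified Lean document; each statement's English description precedes it below -/
import Mathlib

section
/- Let u be a fundamental piece for parameters n ≥ 1 and h > 0, and let Γ(u) = {(z, u(z)) : z ∈ Ω} ⊂ 𝔻 × ℝ be its open graph. Then for any two elements g, g' of the symmetry group G, the translates g·Γ(u) and g'·Γ(u) are either equal or disjoint. -/
open Complex Filter Topology Set

noncomputable section

/-- Conformal factor of the Poincaré disk metric: `λ(z) = 2/(1-|z|²)`. -/
def lam (z : ℂ) : ℝ := 2 / (1 - ‖z‖ ^ 2)

/-- Euclidean gradient of `u : ℂ → ℝ`, viewed as a vector in `ℂ ≅ ℝ²`. -/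
def egrad (u : ℂ → ℝ) (z : ℂ) : ℂ :=
  ⟨fderiv ℝ u z 1, fderiv ℝ u z Complex.I⟩

/-- Euclidean divergence of a vector field on `ℂ ≅ ℝ²`. -/
def ediv (V : ℂ → ℂ) (z : ℂ) : ℝ :=
  (fderiv ℝ V z 1).re + (fderiv ℝ V z Complex.I).im

/-- The vector field `λ∇u/√(λ² + |∇u|²)`. -/
def minVF (u : ℂ → ℝ) (z : ℂ) : ℂ :=
  (lam z / Real.sqrt ((lam z) ^ 2 + Complex.normSq (egrad u z))) • egrad u z

/-- `u` is a (smooth) minimal graph on `Ω`. -/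
def IsMinimalGraph (Ω : Set ℂ) (u : ℂ → ℝ) : Prop :=
  ContDiffOn ℝ (⊤ : ℕ∞) u Ω ∧ ∀ z ∈ Ω, ediv (minVF u) z = 0

/-- `α = π/(2n)`. -/
def alphaN (n : ℕ) : ℝ := Real.pi / (2 * n)

/-- Center `c_α = 1 + i·tan(α/2)`. -/
def cA (n : ℕ) : ℂ := 1 + Complex.I * (Real.tan (alphaN n / 2) : ℝ)

/-- The ideal geodesic triangle `Ω` with vertices `0`, `1`, `e^{iα}`. -/
def OmegaN (n : ℕ) : Set ℂ :=
  {z | ‖z‖ < 1 ∧ 0 < z.arg ∧ z.arg < alphaN n ∧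
    Real.tan (alphaN n / 2) < ‖z - cA n‖}

/-- The ideal geodesic `γ_α` joining `1` and `e^{iα}`. -/
def gammaN (n : ℕ) : Set ℂ :=
  {z | ‖z‖ < 1 ∧ ‖z - cA n‖ = Real.tan (alphaN n / 2)}

/-- A fundamental piece for parameters `n`, `h`. -/
def FundamentalPiece (n : ℕ) (h : ℝ) (u : ℂ → ℝ) : Prop :=
  IsMinimalGraph (OmegaN n) u ∧
  (∀ x : ℝ, 0 < x → x < 1 → Tendsto u (𝓝[OmegaN n] (x : ℂ)) (𝓝 0)) ∧
  (∀ x : ℝ, 0 < x → x < 1 →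
    Tendsto u (𝓝[OmegaN n] ((x : ℂ) * Complex.exp (alphaN n * Complex.I))) (𝓝 h)) ∧
  (∀ ζ ∈ gammaN n, Tendsto u (𝓝[OmegaN n] ζ) atTop)

/-- The model `𝔻 × ℝ` of `ℍ² × ℝ` inside `ℂ × ℝ`. -/
def DR : Set (ℂ × ℝ) := {p | ‖p.1‖ < 1}

/-- The three generating isometries, as a set of bijections of `ℂ × ℝ`:
`σ₁(z,t) = (conj z, −t)`, `σ₂(z,t) = (e^{2iα}·conj z, 2h − t)`, `σ₃(z,t) = (−z, t)`. -/
def genSet (α h : ℝ) : Set (Equiv.Perm (ℂ × ℝ)) :=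
  {g | ⇑g = (fun p : ℂ × ℝ => ((starRingEnd ℂ) p.1, -p.2)) ∨
       ⇑g = (fun p : ℂ × ℝ =>
          (Complex.exp (2 * α * Complex.I) * (starRingEnd ℂ) p.1, 2 * h - p.2)) ∨
       ⇑g = (fun p : ℂ × ℝ => (-p.1, p.2))}

/-- The symmetry group `G` generated by `σ₁`, `σ₂`, `σ₃`. -/
def Ggrp (α h : ℝ) : Subgroup (Equiv.Perm (ℂ × ℝ)) := Subgroup.closure (genSet α h)

/-- The open graph `Γ(u) = {(z, u(z)) : z ∈ Ω}`. -/
def graphSet (Ω : Set ℂ) (u : ℂ → ℝ) : Set (ℂ × ℝ) := {p | p.1 ∈ Ω ∧ p.2 = u p.1}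

/-- `K(u)`: the closure of the graph of `u` in `𝔻 × ℝ`. -/
def Kset (n : ℕ) (u : ℂ → ℝ) : Set (ℂ × ℝ) := closure (graphSet (OmegaN n) u) ∩ DR

/-- The helicoidal-Scherk example `Σ(u) = ⋃_{g ∈ G} g·K(u)`. -/
def SigmaSet (n : ℕ) (h : ℝ) (u : ℂ → ℝ) : Set (ℂ × ℝ) :=
  ⋃ g ∈ Ggrp (alphaN n) h, ⇑g '' Kset n u


/-! ### Auxiliary lemmas -/

lemma arg_exp_coe_angle' (θ : ℝ) :
    ((Complex.exp ((θ : ℂ) * Complex.I)).arg : Real.Angle) = (θ : Real.Angle) := by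
  rw [Complex.arg_exp_mul_I]
  rw [Real.Angle.angle_eq_iff_two_pi_dvd_sub]
  refine ⟨-(toIocDiv (mul_pos two_pos Real.pi_pos) (-Real.pi) θ), ?_⟩
  rw [toIocMod_sub_self (mul_pos two_pos Real.pi_pos) (-Real.pi) θ]
  push_cast [zsmul_eq_mul]; ring

lemma exp_re_mul' (θ₁ θ₂ : ℝ) :
    Complex.exp ((θ₁ : ℂ) * Complex.I) * Complex.exp ((θ₂ : ℂ) * Complex.I)
      = Complex.exp (((θ₁ + θ₂ : ℝ) : ℂ) * Complex.I) := by
  rw [← Complex.exp_add]; push_cast; ring_nf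

lemma exp_re_conj' (θ : ℝ) :
    (starRingEnd ℂ) (Complex.exp ((θ : ℂ) * Complex.I))
      = Complex.exp (((-θ : ℝ) : ℂ) * Complex.I) := by
  rw [← Complex.exp_conj]; congr 1
  rw [map_mul, Complex.conj_ofReal, Complex.conj_I]; push_cast; ring

lemma alphaN_pos' {n : ℕ} (hn : 1 ≤ n) : 0 < alphaN n := by
  have hn' : (0:ℝ) < n := by exact_mod_cast hn
  exact div_pos Real.pi_pos (by positivity)

lemma pi_eq' {n : ℕ} (hn : 1 ≤ n) : Real.pi = 2 * n * alphaN n := by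
  have hn' : (0:ℝ) < n := by exact_mod_cast hn
  rw [alphaN]; field_simp

lemma sector_rot' {n : ℕ} (hn : 1 ≤ n) (m : ℤ) (z : ℂ)
    (ha1 : 0 < z.arg) (ha2 : z.arg < alphaN n)
    (hb1 : 0 < (Complex.exp (((2 * alphaN n * (m:ℝ) : ℝ) : ℂ) * Complex.I) * z).arg)
    (hb2 : (Complex.exp (((2 * alphaN n * (m:ℝ) : ℝ) : ℂ) * Complex.I) * z).arg < alphaN n) :
    Complex.exp (((2 * alphaN n * (m:ℝ) : ℝ) : ℂ) * Complex.I) = 1 := by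
  set α := alphaN n with hα'
  have hα : 0 < α := alphaN_pos' hn
  set w := Complex.exp (((2 * α * (m:ℝ) : ℝ) : ℂ) * Complex.I) with hw'
  have hzne : z ≠ 0 := by rintro rfl; simp at ha1
  have hwne : w ≠ 0 := Complex.exp_ne_zero _
  have h1 : (((w * z).arg : Real.Angle)) = ((2 * α * (m:ℝ) + z.arg : ℝ) : Real.Angle) := by
    rw [Complex.arg_mul_coe_angle hwne hzne, hw', arg_exp_coe_angle', ← Real.Angle.coe_add]
  obtain ⟨k, hk⟩ := Real.Angle.angle_eq_iff_two_pi_dvd_sub.1 h1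
  have hπ := pi_eq' hn
  have ht : 2 * α * ((m + 2 * (n:ℤ) * k : ℤ) : ℝ) = (w * z).arg - z.arg := by
    push_cast
    have h2 : 2 * Real.pi * (k:ℝ) = 2 * α * (2 * (n:ℝ) * (k:ℝ)) := by rw [hπ]; ring
    nlinarith [hk]
  set t : ℤ := m + 2 * (n:ℤ) * k with htdef
  have ht1 : (t:ℝ) < 1 := by nlinarith
  have ht2 : (-1:ℝ) < (t:ℝ) := by nlinarith
  have htz : t = 0 := by
    have a1 : t < 1 := by exact_mod_cast ht1
    have a2 : -1 < t := by exact_mod_cast ht2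
    omega
  have hm : (m:ℝ) = ((-k:ℤ):ℝ) * (2 * (n:ℝ)) := by
    have : m = -(2 * (n:ℤ) * k) := by omega
    rw [this]; push_cast; ring
  have hreal : 2 * α * (m:ℝ) = ((-k:ℤ):ℝ) * (2 * Real.pi) := by
    rw [hm, hπ]; push_cast; ring
  rw [hw', hreal]
  rw [show ((((-k:ℤ):ℝ) * (2 * Real.pi) : ℝ) : ℂ) * Complex.I
      = ((-k:ℤ):ℂ) * (2 * (Real.pi:ℂ) * Complex.I) by push_cast; ring]
  exact Complex.exp_int_mul_two_pi_mul_I (-k)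

lemma sector_ref' {n : ℕ} (hn : 1 ≤ n) (m : ℤ) (z : ℂ)
    (ha1 : 0 < z.arg) (ha2 : z.arg < alphaN n)
    (hb1 : 0 < (Complex.exp (((2 * alphaN n * (m:ℝ) : ℝ) : ℂ) * Complex.I) * (starRingEnd ℂ) z).arg)
    (hb2 : (Complex.exp (((2 * alphaN n * (m:ℝ) : ℝ) : ℂ) * Complex.I) * (starRingEnd ℂ) z).arg < alphaN n) :
    False := by
  set α := alphaN n with hα'
  have hα : 0 < α := alphaN_pos' hn
  set w := Complex.exp (((2 * α * (m:ℝ) : ℝ) : ℂ) * Complex.I) with hw'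
  have hzne : z ≠ 0 := by rintro rfl; simp at ha1
  have hcne : (starRingEnd ℂ) z ≠ 0 := by simpa using hzne
  have hwne : w ≠ 0 := Complex.exp_ne_zero _
  have h1 : (((w * (starRingEnd ℂ) z).arg : Real.Angle))
      = ((2 * α * (m:ℝ) - z.arg : ℝ) : Real.Angle) := by
    rw [Complex.arg_mul_coe_angle hwne hcne, hw', arg_exp_coe_angle',
      Complex.arg_conj_coe_angle, Real.Angle.coe_sub, sub_eq_add_neg]
  obtain ⟨k, hk⟩ := Real.Angle.angle_eq_iff_two_pi_dvd_sub.1 h1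
  have hπ := pi_eq' hn
  have ht : 2 * α * ((m + 2 * (n:ℤ) * k : ℤ) : ℝ)
      = (w * (starRingEnd ℂ) z).arg + z.arg := by
    push_cast
    have h2 : 2 * Real.pi * (k:ℝ) = 2 * α * (2 * (n:ℝ) * (k:ℝ)) := by rw [hπ]; ring
    nlinarith [hk]
  set t : ℤ := m + 2 * (n:ℤ) * k with htdef
  have ht1 : (t:ℝ) < 1 := by nlinarith
  have ht2 : (0:ℝ) < (t:ℝ) := by nlinarith
  have a1 : t < 1 := by exact_mod_cast ht1
  have a2 : 0 < t := by exact_mod_cast ht2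
  omega

/-- Normal form for elements of the symmetry group. -/
def QQ (n : ℕ) (g : Equiv.Perm (ℂ × ℝ)) : Prop :=
  ∃ (m : ℤ) (c : ℝ),
    (⇑g = fun p : ℂ × ℝ =>
      (Complex.exp (((2 * alphaN n * (m:ℝ) : ℝ) : ℂ) * Complex.I) * p.1, p.2 + c)) ∨
    (⇑g = fun p : ℂ × ℝ =>
      (Complex.exp (((2 * alphaN n * (m:ℝ) : ℝ) : ℂ) * Complex.I) * (starRingEnd ℂ) p.1,
        c - p.2))

lemma QQ_mem {n : ℕ} (hn : 1 ≤ n) (h : ℝ) :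
    ∀ g ∈ Ggrp (alphaN n) h, QQ n g := by
  intro g hg
  induction hg using Subgroup.closure_induction with
  | mem x hx =>
    rcases hx with hx | hx | hx
    · exact ⟨0, 0, Or.inr (by rw [hx]; funext p; simp)⟩
    · refine ⟨1, 2 * h, Or.inr ?_⟩
      rw [hx]; funext p
      norm_num [Complex.ofReal_mul]
    · refine ⟨(n:ℤ), 0, Or.inl ?_⟩
      have e : (2 * alphaN n * (((n:ℤ)):ℝ) : ℝ) = Real.pi := by
        rw [pi_eq' hn]; push_cast; ring
      rw [hx]; funext p
      rw [e]
      simp [Complex.exp_pi_mul_I]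
  | one => exact ⟨0, 0, Or.inl (by funext p; simp)⟩
  | mul x y hx hy Qx Qy =>
    obtain ⟨m1, c1, H1 | H1⟩ := Qx <;> obtain ⟨m2, c2, H2 | H2⟩ := Qy
    · refine ⟨m1 + m2, c1 + c2, Or.inl ?_⟩
      funext p
      simp only [Equiv.Perm.coe_mul, Function.comp_apply, H1, H2, Prod.mk.injEq]
      constructor
      · rw [← mul_assoc, exp_re_mul']
        norm_num; left; push_cast; ring
      · ring
    · refine ⟨m1 + m2, c1 + c2, Or.inr ?_⟩
      funext p
      simp only [Equiv.Perm.coe_mul, Function.comp_apply, H1, H2, Prod.mk.injEq]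
      constructor
      · rw [← mul_assoc, exp_re_mul']
        norm_num; left; push_cast; ring
      · ring
    · refine ⟨m1 - m2, c1 - c2, Or.inr ?_⟩
      funext p
      simp only [Equiv.Perm.coe_mul, Function.comp_apply, H1, H2, Prod.mk.injEq]
      constructor
      · rw [map_mul, exp_re_conj', ← mul_assoc, exp_re_mul']
        norm_num; left; push_cast; ring
      · ring
    · refine ⟨m1 - m2, c1 - c2, Or.inl ?_⟩
      funext p
      simp only [Equiv.Perm.coe_mul, Function.comp_apply, H1, H2, Prod.mk.injEq]
      constructor
      · rw [map_mul, exp_re_conj', Complex.conj_conj, ← mul_assoc, exp_re_mul']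
        norm_num; left; push_cast; ring
      · ring
  | inv x hx Qx =>
    obtain ⟨m, c, H | H⟩ := Qx
    · refine ⟨-m, -c, Or.inl ?_⟩
      funext p
      rw [show (⇑x⁻¹ : ℂ × ℝ → ℂ × ℝ) p = x.symm p from rfl, Equiv.symm_apply_eq, H]
      rw [Prod.ext_iff]
      constructor
      · show p.1 = _
        dsimp only
        rw [← mul_assoc, exp_re_mul']
        rw [show (2 * alphaN n * (m:ℝ) + 2 * alphaN n * ((-m : ℤ):ℝ) : ℝ) = 0 by
          push_cast; ring]
        simp
      · show p.2 = p.2 + -c + c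
        ring
    · refine ⟨m, c, Or.inr ?_⟩
      funext p
      rw [show (⇑x⁻¹ : ℂ × ℝ → ℂ × ℝ) p = x.symm p from rfl, Equiv.symm_apply_eq, H]
      rw [Prod.ext_iff]
      constructor
      · show p.1 = _
        dsimp only
        rw [map_mul, exp_re_conj', Complex.conj_conj, ← mul_assoc, exp_re_mul']
        rw [show (2 * alphaN n * (m:ℝ) + -(2 * alphaN n * (m:ℝ)) : ℝ) = 0 by ring]
        simp
      · show p.2 = c - (c - p.2)
        ring

/-- any two `G`-translates of the open graph of a fundamental piece are
either equal or disjoint. -/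
theorem translates_eq_or_disjoint (n : ℕ) (hn : 1 ≤ n) (h : ℝ) (hh : 0 < h)
    (u : ℂ → ℝ) (hu : FundamentalPiece n h u) :
    ∀ g g' : Equiv.Perm (ℂ × ℝ), g ∈ Ggrp (alphaN n) h → g' ∈ Ggrp (alphaN n) h →
      ⇑g '' graphSet (OmegaN n) u = ⇑g' '' graphSet (OmegaN n) u ∨
      Disjoint (⇑g '' graphSet (OmegaN n) u) (⇑g' '' graphSet (OmegaN n) u) := by
  intro g g' hg hg'
  set Γ := graphSet (OmegaN n) u with hΓ
  have hf : QQ n (g'⁻¹ * g) := QQ_mem hn h (g'⁻¹ * g) (mul_mem (inv_mem hg') hg)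
  have himg : ⇑g '' Γ = ⇑g' '' (⇑(g'⁻¹ * g) '' Γ) := by
    rw [← Set.image_comp, ← Equiv.Perm.coe_mul, mul_inv_cancel_left]
  obtain ⟨m, c, H | H⟩ := hf
  · by_cases hd : Disjoint (⇑(g'⁻¹ * g) '' Γ) Γ
    · right; rw [himg]; exact (Set.disjoint_image_iff g'.injective).2 hd
    · left
      obtain ⟨p, hp1, hp2⟩ := Set.not_disjoint_iff.mp hd
      obtain ⟨q, hq, rfl⟩ := hp1
      simp only [H] at hp2
      obtain ⟨hbd, hb1, hb2, hbc⟩ := hp2.1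
      have hw1 : Complex.exp (((2 * alphaN n * (m:ℝ) : ℝ) : ℂ) * Complex.I) = 1 :=
        sector_rot' hn m q.1 hq.1.2.1 hq.1.2.2.1 hb1 hb2
      have hc : c = 0 := by
        have h2 := hp2.2
        simp only [hw1, one_mul] at h2
        have h3 : q.2 = u q.1 := hq.2
        linarith
      have hid : ⇑(g'⁻¹ * g) = id := by
        funext p; rw [H]; simp only [hw1, one_mul, hc, add_zero, id_eq]
      rw [himg, hid, Set.image_id]
  · right
    rw [himg]
    refine (Set.disjoint_image_iff g'.injective).2 ?_
    rw [Set.disjoint_left]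
    rintro p ⟨q, hq, rfl⟩ hp2
    simp only [H] at hp2
    obtain ⟨hbd, hb1, hb2, hbc⟩ := hp2.1
    exact sector_ref' hn m q.1 hq.1.2.1 hq.1.2.2.1 hb1 hb2
end
end

section
/- Let u be a fundamental piece for parameters n ≥ 1 and h > 0, and let Σ(u) = ⋃_{g ∈ G} g·K(u) be the associated helicoidal-Scherk example. Then the vertical plane γ_α × ℝ over the ideal geodesic γ_α is contained in the closure of Σ(u) in 𝔻 × ℝ but is disjoint from Σ(u). In particular Σ(u) is not a closed subset of 𝔻 × ℝ, so the helicoidal-Scherk example is complete but not properly embedded in ℍ² × ℝ. -/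
open Complex Filter Topology Set

noncomputable section

/-- The vertical plane `γ_α × ℝ` over the ideal geodesic `γ_α`. -/
def planeN (n : ℕ) : Set (ℂ × ℝ) := {p | p.1 ∈ gammaN n}

/-! ### Auxiliary definitions and lemmas -/

/-- radius `r = tan(α/2)` -/
def rN (n : ℕ) : ℝ := Real.tan (alphaN n / 2)

variable {n : ℕ}

lemma alpha_pos (hn : 1 ≤ n) : 0 < alphaN n := by
  have : (0:ℝ) < n := by exact_mod_cast hn
  unfold alphaN; positivity

lemma alpha_le (hn : 1 ≤ n) : alphaN n ≤ Real.pi / 2 := by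
  have h1 : (1:ℝ) ≤ n := by exact_mod_cast hn
  unfold alphaN
  rw [div_le_div_iff₀ (by linarith) (by norm_num)]
  nlinarith [Real.pi_pos]

lemma beta_pos (hn : 1 ≤ n) : 0 < alphaN n / 2 := by linarith [alpha_pos hn]
lemma beta_lt (hn : 1 ≤ n) : alphaN n / 2 < Real.pi / 2 := by
  linarith [alpha_le hn, Real.pi_pos]

lemma cosβ_pos (hn : 1 ≤ n) : 0 < Real.cos (alphaN n / 2) :=
  Real.cos_pos_of_mem_Ioo ⟨by linarith [beta_pos hn, Real.pi_pos], beta_lt hn⟩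

lemma rN_pos (hn : 1 ≤ n) : 0 < rN n :=
  Real.tan_pos_of_pos_of_lt_pi_div_two (beta_pos hn) (beta_lt hn)

lemma sinβ_eq (hn : 1 ≤ n) : Real.sin (alphaN n / 2) = rN n * Real.cos (alphaN n / 2) := by
  rw [rN, Real.tan_eq_sin_div_cos, div_mul_cancel₀]
  exact (cosβ_pos hn).ne'

lemma cA_re : (cA n).re = 1 := by rw [cA]; simp [-Complex.ofReal_tan]
lemma cA_im : (cA n).im = rN n := by
  rw [cA, rN]; simp [-Complex.ofReal_tan]

lemma normSq_cA : normSq (cA n) = 1 + rN n ^ 2 := by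
  rw [normSq_apply, cA_re, cA_im]; ring

lemma mul_conj_cA_re (z : ℂ) : (z * (starRingEnd ℂ) (cA n)).re = z.re + rN n * z.im := by
  rw [Complex.mul_re, Complex.conj_re, Complex.conj_im, cA_re, cA_im]; ring

lemma oneAddSq_cosβ (hn : 1 ≤ n) : (1 + rN n ^ 2) * Real.cos (alphaN n / 2) ^ 2 = 1 := by
  have hpy := Real.sin_sq_add_cos_sq (alphaN n / 2)
  rw [sinβ_eq hn] at hpy
  nlinarith

lemma cos_alpha_eq (hn : 1 ≤ n) : (1 + rN n ^ 2) * Real.cos (alphaN n) = 1 - rN n ^ 2 := by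
  have h3 := oneAddSq_cosβ hn
  have hs := sinβ_eq hn
  have h2 : Real.cos (alphaN n) = Real.cos (alphaN n / 2) ^ 2 - Real.sin (alphaN n / 2) ^ 2 := by
    rw [show alphaN n = alphaN n / 2 + alphaN n / 2 by ring, Real.cos_add]; ring
  rw [h2, hs]
  nlinarith

lemma sin_alpha_eq (hn : 1 ≤ n) : (1 + rN n ^ 2) * Real.sin (alphaN n) = 2 * rN n := by
  have h3 := oneAddSq_cosβ hn
  have hs := sinβ_eq hn
  have h2 : Real.sin (alphaN n)
      = 2 * Real.sin (alphaN n / 2) * Real.cos (alphaN n / 2) := by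
    rw [show alphaN n = alphaN n / 2 + alphaN n / 2 by ring, Real.sin_add]; ring
  rw [h2]
  calc (1 + rN n ^ 2) * (2 * Real.sin (alphaN n / 2) * Real.cos (alphaN n / 2))
      = 2 * rN n * ((1 + rN n ^ 2) * Real.cos (alphaN n / 2) ^ 2) := by rw [hs]; ring
    _ = 2 * rN n := by rw [h3]; ring

lemma cA_sq (hn : 1 ≤ n) :
    (cA n) ^ 2 = ((1 + rN n ^ 2 : ℝ) : ℂ) * Complex.exp ((alphaN n : ℝ) * Complex.I) := by
  apply Complex.ext
  · rw [sq, Complex.mul_re, Complex.mul_re, cA_re, cA_im, Complex.ofReal_re, Complex.ofReal_im,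
      Complex.exp_ofReal_mul_I_re, Complex.exp_ofReal_mul_I_im]
    have := cos_alpha_eq hn
    nlinarith
  · rw [sq, Complex.mul_im, Complex.mul_im, cA_re, cA_im, Complex.ofReal_re, Complex.ofReal_im,
      Complex.exp_ofReal_mul_I_re, Complex.exp_ofReal_mul_I_im]
    have := sin_alpha_eq hn
    nlinarith

/-- Forward sector bound. -/
lemma sector_le (hn : 1 ≤ n) {z : ℂ} (h1 : 0 < z.arg) (h2 : z.arg < alphaN n) :
    ‖z‖ ≤ (z * (starRingEnd ℂ) (cA n)).re := by
  have hz : z ≠ 0 := by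
    intro h; rw [h] at h1; simp [Complex.arg_zero] at h1
  have habs : 0 < ‖z‖ := norm_pos_iff.mpr hz
  have hre : z.re = ‖z‖ * Real.cos z.arg := by
    rw [Complex.cos_arg hz]; field_simp
  have him : z.im = ‖z‖ * Real.sin z.arg := by
    rw [Complex.sin_arg]; field_simp
  rw [mul_conj_cA_re, hre, him]
  have hβpos := beta_pos hn
  have hβlt := beta_lt hn
  have hπ := Real.pi_pos
  have hcos : Real.cos (alphaN n / 2) ≤ Real.cos (z.arg - alphaN n / 2) := by
    have h3 : |z.arg - alphaN n / 2| ≤ alphaN n / 2 := abs_le.mpr ⟨by linarith, by linarith⟩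
    calc Real.cos (alphaN n / 2) ≤ Real.cos |z.arg - alphaN n / 2| :=
          Real.cos_le_cos_of_nonneg_of_le_pi (abs_nonneg _) (by linarith) h3
      _ = _ := Real.cos_abs _
  have hc : 0 < Real.cos (alphaN n / 2) := cosβ_pos hn
  have hsin : Real.sin (alphaN n / 2) = rN n * Real.cos (alphaN n / 2) := sinβ_eq hn
  rw [Real.cos_sub, hsin] at hcos
  have key : 1 ≤ Real.cos z.arg + rN n * Real.sin z.arg := by nlinarith
  nlinarith

/-- Backward strict sector characterization. -/
lemma sector_back (hn : 1 ≤ n) {z : ℂ}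
    (h1 : ‖z‖ < (z * (starRingEnd ℂ) (cA n)).re) :
    0 < z.arg ∧ z.arg < alphaN n := by
  have hz : z ≠ 0 := by
    intro h; rw [h] at h1; simp at h1
  have habs : 0 < ‖z‖ := norm_pos_iff.mpr hz
  have hre : z.re = ‖z‖ * Real.cos z.arg := by
    rw [Complex.cos_arg hz]; field_simp
  have him : z.im = ‖z‖ * Real.sin z.arg := by
    rw [Complex.sin_arg]; field_simp
  rw [mul_conj_cA_re, hre, him] at h1
  have key : 1 < Real.cos z.arg + rN n * Real.sin z.arg := by nlinarith
  have hβpos := beta_pos hn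
  have hβlt := beta_lt hn
  have hπ := Real.pi_pos
  have hθle := Complex.arg_le_pi z
  have hθgt := Complex.neg_pi_lt_arg z
  have hθpos : 0 < z.arg := by
    by_contra hle
    push_neg at hle
    have hsin : Real.sin z.arg ≤ 0 :=
      Real.sin_nonpos_of_nonpos_of_neg_pi_le hle (le_of_lt hθgt)
    nlinarith [Real.cos_le_one z.arg, rN_pos hn]
  refine ⟨hθpos, ?_⟩
  by_contra hge
  push_neg at hge
  have hcos : Real.cos (z.arg - alphaN n / 2) ≤ Real.cos (alphaN n / 2) :=
    Real.cos_le_cos_of_nonneg_of_le_pi (by linarith) (by linarith) (by linarith)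
  have hc : 0 < Real.cos (alphaN n / 2) := cosβ_pos hn
  have hsin : Real.sin (alphaN n / 2) = rN n * Real.cos (alphaN n / 2) := sinβ_eq hn
  rw [Real.cos_sub, hsin] at hcos
  nlinarith

/-- Roots of unity distinct from `1` have real part at most `cos α`. -/
lemma root_re_le (hn : 1 ≤ n) {v : ℂ} (hv : v ^ (4 * n) = 1) (hv1 : v ≠ 1) :
    v.re ≤ Real.cos (alphaN n) := by
  have hnR : (0:ℝ) < n := by exact_mod_cast hn
  have habs : ‖v‖ = 1 := by
    have h1 : ‖v‖ ^ (4 * n) = 1 := by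
      rw [← norm_pow, hv, norm_one]
    have h0 : 0 ≤ ‖v‖ := norm_nonneg v
    rcases lt_trichotomy (‖v‖) 1 with h | h | h
    · exfalso; linarith [pow_lt_one₀ h0 h (by omega : 4 * n ≠ 0)]
    · exact h
    · exfalso; linarith [one_lt_pow₀ h (by omega : 4 * n ≠ 0)]
  have hv' : v = Complex.exp (v.arg * Complex.I) := by
    conv_lhs => rw [← Complex.norm_mul_exp_arg_mul_I v]
    rw [habs]; simp
  have hexp : Complex.exp (((4 * n : ℕ) : ℂ) * (v.arg * Complex.I)) = 1 := by
    rw [Complex.exp_nat_mul, ← hv']; exact hv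
  obtain ⟨k, hk⟩ := Complex.exp_eq_one_iff.mp hexp
  have hθeq : (4 * (n:ℝ)) * v.arg = k * (2 * Real.pi) := by
    have h3 : ((((4 * (n:ℝ)) * v.arg : ℝ)) : ℂ) * Complex.I
        = ((((k:ℝ) * (2 * Real.pi)) : ℝ) : ℂ) * Complex.I := by
      push_cast
      push_cast at hk
      rw [show ((4:ℂ) * n * v.arg) * Complex.I = (4 * n : ℂ) * (v.arg * Complex.I) by ring, hk]
      ring
    exact_mod_cast mul_right_cancel₀ Complex.I_ne_zero h3
  have hθval : v.arg = k * alphaN n := by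
    rw [alphaN]
    field_simp
    linarith
  have hk0 : k ≠ 0 := by
    intro h0
    rw [h0] at hθval
    simp at hθval
    rw [hθval] at hv'
    simp at hv'
    exact hv1 hv'
  have hre : v.re = Real.cos v.arg := by
    conv_lhs => rw [hv']
    simp
  rw [hre, ← Real.cos_abs]
  apply Real.cos_le_cos_of_nonneg_of_le_pi
  · linarith [alpha_pos hn]
  · exact abs_le.mpr ⟨le_of_lt (Complex.neg_pi_lt_arg v), Complex.arg_le_pi v⟩
  · rw [hθval, abs_mul]
    have h5 : (1:ℝ) ≤ |(k:ℝ)| := by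
      rw [← Int.cast_abs]
      exact_mod_cast Int.one_le_abs hk0
    rw [abs_of_pos (alpha_pos hn)]
    nlinarith [alpha_pos hn]

/-! ### The core algebraic inequality -/

lemma coreReal {r ρ A B P Q : ℝ} (hr : 0 < r) (hρ0 : 0 ≤ ρ) (hρ : ρ < 1)
    (hA : ρ ≤ A) (hB : 2 * B = ρ^2 + 1)
    (hP : A^2 + P^2 = ρ^2 * (1 + r^2)) (hQ : B^2 + Q^2 = ρ^2 * (1 + r^2))
    (hmain : A * B + P * Q ≤ (1 - r^2) * ρ^2) : False := by
  have hρpos : 0 < ρ := by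
    rcases eq_or_lt_of_le hρ0 with h0 | h
    · exfalso; rw [← h0] at hQ hB; nlinarith [sq_nonneg Q, sq_nonneg B]
    · exact h
  have hBpos : 0 < B := by nlinarith
  have hABρ : ρ^2 < A * B := by
    have h1 : ρ * B ≤ A * B := mul_le_mul_of_nonneg_right hA hBpos.le
    nlinarith [mul_pos hρpos (by nlinarith : (0:ℝ) < (1-ρ)^2)]
  have hL : 0 < A * B - (1 - r^2) * ρ^2 := by
    nlinarith [mul_pos (mul_pos hr hr) (mul_pos hρpos hρpos)]
  have hPQ : P * Q ≤ -(A * B - (1 - r^2) * ρ^2) := by linarith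
  have hsq : (A * B - (1 - r^2) * ρ^2)^2 ≤ (P * Q)^2 := by
    nlinarith [sq_nonneg (P * Q + (A * B - (1 - r^2) * ρ^2))]
  have e1 : P^2 = ρ^2 * (1 + r^2) - A^2 := by linarith
  have e2 : Q^2 = ρ^2 * (1 + r^2) - B^2 := by linarith
  have e3 : (P * Q)^2 = (ρ^2 * (1 + r^2) - A^2) * (ρ^2 * (1 + r^2) - B^2) := by
    rw [mul_pow, e1, e2]
  have hfin : (P * Q)^2 < (A * B - (1 - r^2) * ρ^2)^2 := by
    rw [e3]
    nlinarith [mul_nonneg (mul_nonneg (sq_nonneg ρ) (by positivity : (0:ℝ) ≤ 1 + r^2))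
        (sq_nonneg (A - B)),
      mul_pos (by positivity : (0:ℝ) < 4 * r^2 * ρ^2) (sub_pos.2 hABρ)]
  linarith

lemma coreC {r : ℝ} (hr : 0 < r) {c c' z : ℂ}
    (hc : normSq c = 1 + r^2) (hc' : normSq c' = 1 + r^2)
    (hcc' : (c * (starRingEnd ℂ) c').re ≤ 1 - r^2)
    (hz : ‖z‖ < 1) (hA : ‖z‖ ≤ (z * (starRingEnd ℂ) c).re)
    (hcirc : ‖z - c'‖ = r) : False := by
  set ρ := ‖z‖ with hρdef
  set A := (z * (starRingEnd ℂ) c).re with hAdef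
  set B := (z * (starRingEnd ℂ) c').re with hBdef
  set P := (z * (starRingEnd ℂ) c).im with hPdef
  set Q := (z * (starRingEnd ℂ) c').im with hQdef
  have hρsq : ρ^2 = normSq z := Complex.sq_norm z
  have hB : 2 * B = ρ^2 + 1 := by
    have h1 : normSq (z - c') = r^2 := by
      rw [← Complex.sq_norm, hcirc]
    rw [Complex.normSq_sub] at h1
    rw [hρsq]; rw [hc'] at h1; linarith
  have hP : A^2 + P^2 = ρ^2 * (1 + r^2) := by
    have : A^2 + P^2 = normSq (z * (starRingEnd ℂ) c) := by
      rw [Complex.normSq_apply]; ring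
    rw [this, Complex.normSq_mul, Complex.normSq_conj, hc, hρsq]
  have hQ : B^2 + Q^2 = ρ^2 * (1 + r^2) := by
    have : B^2 + Q^2 = normSq (z * (starRingEnd ℂ) c') := by
      rw [Complex.normSq_apply]; ring
    rw [this, Complex.normSq_mul, Complex.normSq_conj, hc', hρsq]
  have hmain : A * B + P * Q ≤ (1 - r^2) * ρ^2 := by
    have hre : A * B + P * Q = normSq z * (c * (starRingEnd ℂ) c').re := by
      simp only [hAdef, hBdef, hPdef, hQdef, Complex.mul_re, Complex.mul_im,
        Complex.conj_re, Complex.conj_im, Complex.normSq_apply]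
      ring
    rw [hre, ← hρsq]
    calc ρ^2 * (c * (starRingEnd ℂ) c').re ≤ ρ^2 * (1 - r^2) :=
          mul_le_mul_of_nonneg_left hcc' (sq_nonneg ρ)
      _ = (1 - r^2) * ρ^2 := by ring
  exact coreReal hr (norm_nonneg z) hz hA hB hP hQ hmain



def sig1 : Equiv.Perm (ℂ × ℝ) :=
  Function.Involutive.toPerm (fun p : ℂ × ℝ => ((starRingEnd ℂ) p.1, -p.2))
    (fun p => by simp)

def sig2 (α h : ℝ) : Equiv.Perm (ℂ × ℝ) :=
  Function.Involutive.toPerm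
    (fun p : ℂ × ℝ => (Complex.exp (2 * α * Complex.I) * (starRingEnd ℂ) p.1, 2 * h - p.2))
    (fun p => by
      have hconj : (starRingEnd ℂ) (Complex.exp (2 * α * Complex.I))
          = Complex.exp (-(2 * α * Complex.I)) := by
        rw [← Complex.exp_conj]
        congr 1
        simp only [map_mul, Complex.conj_I, Complex.conj_ofReal, map_ofNat]
        ring
      simp only [map_mul, hconj, Complex.conj_conj]
      ext
      · show Complex.exp (2 * α * Complex.I) * (Complex.exp (-(2 * α * Complex.I)) * p.1) = p.1
        rw [← mul_assoc, ← Complex.exp_add]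
        simp
      · show 2 * h - (2 * h - p.2) = p.2
        ring)

def sig3 : Equiv.Perm (ℂ × ℝ) :=
  Function.Involutive.toPerm (fun p : ℂ × ℝ => (-p.1, p.2)) (fun p => by simp)

lemma sig1_coe : ⇑(sig1) = (fun p : ℂ × ℝ => ((starRingEnd ℂ) p.1, -p.2)) :=
  Function.Involutive.coe_toPerm _
lemma sig2_coe (α h : ℝ) : ⇑(sig2 α h) = (fun p : ℂ × ℝ =>
    (Complex.exp (2 * α * Complex.I) * (starRingEnd ℂ) p.1, 2 * h - p.2)) :=
  Function.Involutive.coe_toPerm _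
lemma sig3_coe : ⇑(sig3) = (fun p : ℂ × ℝ => (-p.1, p.2)) :=
  Function.Involutive.coe_toPerm _

lemma sig1_mem (α h : ℝ) : sig1 ∈ Ggrp α h :=
  Subgroup.subset_closure (Or.inl sig1_coe)
lemma sig2_mem (α h : ℝ) : sig2 α h ∈ Ggrp α h :=
  Subgroup.subset_closure (Or.inr (Or.inl (sig2_coe α h)))
lemma sig3_mem (α h : ℝ) : sig3 ∈ Ggrp α h :=
  Subgroup.subset_closure (Or.inr (Or.inr sig3_coe))

lemma s21_apply (α h : ℝ) (p : ℂ × ℝ) :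
    (sig2 α h * sig1) p = (Complex.exp (2 * α * Complex.I) * p.1, 2 * h + p.2) := by
  rw [Equiv.Perm.mul_apply, sig1_coe, sig2_coe]
  ext
  · show Complex.exp (2 * α * Complex.I) * (starRingEnd ℂ) ((starRingEnd ℂ) p.1) = _
    rw [Complex.conj_conj]
  · show 2 * h - -p.2 = 2 * h + p.2
    ring

lemma s21_pow_apply (α h : ℝ) (k : ℕ) (p : ℂ × ℝ) :
    ((sig2 α h * sig1) ^ k) p = (Complex.exp (2 * α * Complex.I) ^ k * p.1, 2 * k * h + p.2) := by
  induction k generalizing p with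
  | zero => simp
  | succ k ih =>
    rw [pow_succ, Equiv.Perm.mul_apply, s21_apply, ih]
    ext
    · show Complex.exp (2 * α * Complex.I) ^ k * (Complex.exp (2 * α * Complex.I) * p.1) = _
      rw [pow_succ]
      ring
    · show 2 * k * h + (2 * h + p.2) = 2 * (k + 1 : ℕ) * h + p.2
      push_cast
      ring

/-- vertical translation by `2nh` -/
def TT (n : ℕ) (h : ℝ) : Equiv.Perm (ℂ × ℝ) := sig3 * (sig2 (alphaN n) h * sig1) ^ n

lemma TT_mem (h : ℝ) : TT n h ∈ Ggrp (alphaN n) h :=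
  mul_mem (sig3_mem _ _) (pow_mem (mul_mem (sig2_mem _ _) (sig1_mem _ _)) n)

lemma exp_pow_n (hn : 1 ≤ n) : Complex.exp (2 * (alphaN n : ℝ) * Complex.I) ^ n = -1 := by
  rw [← Complex.exp_nat_mul]
  have hne : (n : ℂ) ≠ 0 := Nat.cast_ne_zero.mpr (by omega)
  have harg : (n : ℂ) * (2 * (alphaN n : ℝ) * Complex.I) = (Real.pi : ℂ) * Complex.I := by
    rw [alphaN]
    push_cast
    field_simp
  rw [harg, Complex.exp_pi_mul_I]

lemma TT_apply (hn : 1 ≤ n) (h : ℝ) (p : ℂ × ℝ) : TT n h p = (p.1, 2 * n * h + p.2) := by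
  rw [TT, Equiv.Perm.mul_apply, s21_pow_apply, sig3_coe]
  ext
  · show -(Complex.exp (2 * (alphaN n : ℝ) * Complex.I) ^ n * p.1) = p.1
    rw [exp_pow_n hn]
    ring
  · rfl

lemma TTinv_apply (hn : 1 ≤ n) (h : ℝ) (p : ℂ × ℝ) :
    (TT n h)⁻¹ p = (p.1, p.2 - 2 * n * h) := by
  have h1 : TT n h (p.1, p.2 - 2 * n * h) = p := by
    rw [TT_apply hn]
    ext
    · rfl
    · show 2 * n * h + (p.2 - 2 * n * h) = p.2
      ring
  conv_lhs => rw [← h1]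
  rw [show (TT n h)⁻¹ ((TT n h) (p.1, p.2 - 2 * n * h)) = (p.1, p.2 - 2 * n * h) from
    (TT n h).symm_apply_apply _]

lemma TTinv_pow_apply (hn : 1 ≤ n) (h : ℝ) (m : ℕ) (p : ℂ × ℝ) :
    (((TT n h)⁻¹) ^ m) p = (p.1, p.2 - 2 * n * h * m) := by
  induction m generalizing p with
  | zero => simp
  | succ m ih =>
    rw [pow_succ, Equiv.Perm.mul_apply, TTinv_apply hn, ih]
    ext
    · rfl
    · show p.2 - 2 * n * h - 2 * n * h * m = p.2 - 2 * n * h * (m + 1 : ℕ)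
      push_cast
      ring

/-- Every element of `G` acts on the horizontal factor as `z ↦ w z` or `z ↦ w conj z`
with `w` a `2n`-th root of unity. -/
lemma horiz (hn : 1 ≤ n) (h : ℝ) {g : Equiv.Perm (ℂ × ℝ)} (hg : g ∈ Ggrp (alphaN n) h) :
    ∃ (w : ℂ) (b : Bool), w ^ (2 * n) = 1 ∧
      ∀ p : ℂ × ℝ, (g p).1 = w * (if b then (starRingEnd ℂ) p.1 else p.1) := by
  induction hg using Subgroup.closure_induction with
  | mem x hx =>
    rcases hx with hx | hx | hx
    · exact ⟨1, true, one_pow _, fun p => by rw [hx]; simp⟩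
    · refine ⟨Complex.exp (2 * (alphaN n : ℝ) * Complex.I), true, ?_, fun p => by rw [hx]; simp⟩
      rw [← Complex.exp_nat_mul]
      have harg : ((2 * n : ℕ) : ℂ) * (2 * (alphaN n : ℝ) * Complex.I)
          = 2 * (Real.pi : ℂ) * Complex.I := by
        have hne : (n : ℂ) ≠ 0 := Nat.cast_ne_zero.mpr (by omega)
        rw [alphaN]; push_cast; field_simp; try ring
      rw [harg, Complex.exp_two_pi_mul_I]
    · refine ⟨-1, false, ?_, fun p => by rw [hx]; simp⟩
      rw [show (-1 : ℂ) ^ (2 * n) = ((-1) ^ 2) ^ n by rw [← pow_mul]]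
      simp
  | one => exact ⟨1, false, one_pow _, fun p => by simp⟩
  | mul x y hx hy ihx ihy =>
    obtain ⟨w, b, hw, hwp⟩ := ihx
    obtain ⟨w', b', hw', hwp'⟩ := ihy
    cases b with
    | false =>
      refine ⟨w * w', b', by rw [mul_pow, hw, hw', one_mul], fun p => ?_⟩
      rw [Equiv.Perm.mul_apply, hwp, hwp']
      cases b' <;> simp <;> ring
    | true =>
      refine ⟨w * (starRingEnd ℂ) w', !b', ?_, fun p => ?_⟩
      · rw [mul_pow, hw, ← map_pow, hw', map_one, one_mul]
      · rw [Equiv.Perm.mul_apply, hwp, hwp']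
        cases b' <;> simp [map_mul] <;> ring
  | inv x hx ihx =>
    obtain ⟨w, b, hw, hwp⟩ := ihx
    have hw0 : w ≠ 0 := by
      intro h0
      rw [h0, zero_pow (by omega : 2 * n ≠ 0)] at hw
      exact zero_ne_one hw
    cases b with
    | false =>
      refine ⟨w⁻¹, false, ?_, fun p => ?_⟩
      · rw [inv_pow, hw, inv_one]
      · have h2 : p.1 = w * (x⁻¹ p).1 := by
          have := hwp (x⁻¹ p)
          rw [show x (x⁻¹ p) = p from x.apply_symm_apply p] at this
          simpa using this
        show (x⁻¹ p).1 = w⁻¹ * p.1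
        rw [h2, ← mul_assoc, inv_mul_cancel₀ hw0, one_mul]
    | true =>
      refine ⟨(starRingEnd ℂ) w⁻¹, true, ?_, fun p => ?_⟩
      · rw [← map_pow, inv_pow, hw, inv_one, map_one]
      · have h2 : p.1 = w * (starRingEnd ℂ) (x⁻¹ p).1 := by
          have := hwp (x⁻¹ p)
          rw [show x (x⁻¹ p) = p from x.apply_symm_apply p] at this
          simpa using this
        show (x⁻¹ p).1 = (starRingEnd ℂ) w⁻¹ * (starRingEnd ℂ) p.1
        rw [h2, map_mul, Complex.conj_conj, ← mul_assoc,
          show (starRingEnd ℂ) w⁻¹ * (starRingEnd ℂ) w = (starRingEnd ℂ) (w⁻¹ * w) from (map_mul _ _ _).symm,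
          inv_mul_cancel₀ hw0, map_one, one_mul]

lemma abs_eq_one_of_pow {w : ℂ} {k : ℕ} (hk : k ≠ 0) (hw : w ^ k = 1) :
    ‖w‖ = 1 := by
  have h1 : ‖w‖ ^ k = 1 := by rw [← norm_pow, hw, norm_one]
  have h0 : 0 ≤ ‖w‖ := norm_nonneg w
  rcases lt_trichotomy (‖w‖) 1 with h | h | h
  · exfalso; linarith [pow_lt_one₀ h0 h hk]
  · exact h
  · exfalso; linarith [one_lt_pow₀ h hk]

/-- Points of the vertical plane over `γ` are not in the closure of the graph. -/
lemma graph_closure_avoid {h : ℝ} {u : ℂ → ℝ} (hu : FundamentalPiece n h u)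
    {ζ : ℂ} (hζ : ζ ∈ gammaN n) (t : ℝ) :
    (ζ, t) ∉ closure (graphSet (OmegaN n) u) := by
  intro hmem
  have hev : ∀ᶠ z in 𝓝[OmegaN n] ζ, t + 1 < u z :=
    (hu.2.2.2 ζ hζ).eventually_gt_atTop (t + 1)
  rw [eventually_nhdsWithin_iff, Metric.eventually_nhds_iff] at hev
  obtain ⟨δ, hδ, hδprop⟩ := hev
  rw [Metric.mem_closure_iff] at hmem
  obtain ⟨q, hq, hdist⟩ := hmem (min δ 1) (lt_min hδ one_pos)
  rw [Prod.dist_eq, sup_lt_iff] at hdist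
  have h1 : dist q.1 ζ < δ := by
    rw [dist_comm]; exact lt_of_lt_of_le hdist.1 (min_le_left _ _)
  have h2 : t + 1 < u q.1 := hδprop h1 hq.1
  have h3 : dist t q.2 < 1 := lt_of_lt_of_le hdist.2 (min_le_right _ _)
  rw [hq.2, Real.dist_eq, abs_sub_lt_iff] at h3
  linarith [h3.2]

/-- Points of `γ` satisfy the strict sector inequality. -/
lemma gamma_re {ζ : ℂ} (hζ : ζ ∈ gammaN n) :
    ‖ζ‖ < (ζ * (starRingEnd ℂ) (cA n)).re := by
  obtain ⟨h1, h2⟩ := hζ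
  have hns : normSq (ζ - cA n) = rN n ^ 2 := by
    rw [← Complex.sq_norm, h2]; rfl
  rw [Complex.normSq_sub, normSq_cA] at hns
  have hre : (ζ * (starRingEnd ℂ) (cA n)).re = (normSq ζ + 1) / 2 := by linarith
  have habs : ‖ζ‖ ^ 2 = normSq ζ := Complex.sq_norm ζ
  rw [hre]
  nlinarith [norm_nonneg ζ]

/-- Abstract version of the key step: a point of `K` cannot lie over any circle of
radius `r` whose centre `c'` satisfies the root-of-unity constraints. -/
lemma no_plane_point (hn : 1 ≤ n) {h : ℝ} {u : ℂ → ℝ} (hu : FundamentalPiece n h u)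
    {q : ℂ × ℝ} (hq1 : q ∈ closure (graphSet (OmegaN n) u))
    (hζ1 : ‖q.1‖ < 1) {c' : ℂ}
    (hzc' : ‖q.1 - c'‖ = rN n) (hnsc' : normSq c' = 1 + rN n ^ 2)
    (hcc : c' ≠ cA n → (cA n * (starRingEnd ℂ) c').re ≤ 1 - rN n ^ 2) : False := by
  by_cases hc : c' = cA n
  · have hγ : q.1 ∈ gammaN n := ⟨hζ1, by rw [← hc]; exact hzc'⟩
    exact graph_closure_avoid hu hγ q.2 (by simpa using hq1)
  · have hζcl : q.1 ∈ closure (OmegaN n) := by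
      have h1 : q.1 ∈ Prod.fst '' closure (graphSet (OmegaN n) u) := ⟨q, hq1, rfl⟩
      have h2 : q.1 ∈ closure (Prod.fst '' graphSet (OmegaN n) u) :=
        image_closure_subset_closure_image continuous_fst h1
      refine closure_mono ?_ h2
      rintro _ ⟨p', hp', rfl⟩
      exact hp'.1
    have hA : ‖q.1‖ ≤ (q.1 * (starRingEnd ℂ) (cA n)).re := by
      have hcl : IsClosed {z : ℂ | ‖z‖ ≤ (z * (starRingEnd ℂ) (cA n)).re} :=
        isClosed_le continuous_norm (Complex.continuous_re.comp
          (continuous_id.mul continuous_const))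
      have hsub : OmegaN n ⊆ {z : ℂ | ‖z‖ ≤ (z * (starRingEnd ℂ) (cA n)).re} :=
        fun z hz => sector_le hn hz.2.1 hz.2.2.1
      exact closure_minimal hsub hcl hζcl
    exact coreC (rN_pos hn) normSq_cA hnsc' (hcc hc) hζ1 hA hzc'

/-- Main disjointness. -/
lemma disjoint_plane (hn : 1 ≤ n) {h : ℝ} {u : ℂ → ℝ}
    (hu : FundamentalPiece n h u) :
    Disjoint (planeN n) (SigmaSet n h u) := by
  rw [Set.disjoint_right]
  rintro p hp hplane
  rw [SigmaSet, mem_iUnion₂] at hp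
  obtain ⟨g, hg, q, hqK, rfl⟩ := hp
  obtain ⟨w, b, hw, hwp⟩ := horiz hn h hg
  have hplane' : (g q).1 ∈ gammaN n := hplane
  rw [hwp q] at hplane'
  obtain ⟨hq1, hq2⟩ := hplane'
  have hwabs : ‖w‖ = 1 := abs_eq_one_of_pow (by omega) hw
  have hw0 : w ≠ 0 := by
    intro h0; rw [h0] at hwabs; simp at hwabs
  have hζ1 : ‖q.1‖ < 1 := hqK.2
  have hnsw : normSq w = 1 := by
    rw [← Complex.sq_norm, hwabs]; norm_num
  have hM1 : (0:ℝ) < 1 + rN n ^ 2 := by nlinarith [sq_nonneg (rN n)]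
  have hcA0 : cA n ≠ 0 := by
    intro h0
    have h1 := normSq_cA (n := n)
    rw [h0] at h1
    simp at h1
    nlinarith
  have hw4 : w ^ (4 * n) = 1 := by
    rw [show 4 * n = 2 * n * 2 by ring, pow_mul, hw, one_pow]
  cases b with
  | false =>
    have hq2' : ‖w * q.1 - cA n‖ = rN n := by simpa [rN] using hq2
    have hfac : w * q.1 - cA n = w * (q.1 - w⁻¹ * cA n) := by
      rw [mul_sub, mul_inv_cancel_left₀ hw0]
    rw [hfac, norm_mul, hwabs, one_mul] at hq2'
    have hnsc' : normSq (w⁻¹ * cA n) = 1 + rN n ^ 2 := by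
      rw [Complex.normSq_mul, Complex.normSq_inv, hnsw, normSq_cA]
      norm_num
    refine no_plane_point hn hu hqK.1 hζ1 hq2' hnsc' (fun hcc => ?_)
    set v := (starRingEnd ℂ) w⁻¹ with hvdef
    have hv4 : v ^ (4 * n) = 1 := by
      rw [hvdef, ← map_pow, inv_pow, hw4]
      norm_num
    have hv1 : v ≠ 1 := by
      intro h1
      apply hcc
      have h2 : w⁻¹ = 1 := by
        have h3 := congrArg (starRingEnd ℂ) h1
        rwa [Complex.conj_conj, map_one] at h3
      rw [h2, one_mul]
    have heq : cA n * (starRingEnd ℂ) (w⁻¹ * cA n) = v * (normSq (cA n) : ℂ) := by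
      rw [map_mul, ← Complex.mul_conj (cA n), hvdef]; ring
    rw [heq]
    have hre2 : (v * (normSq (cA n) : ℂ)).re = normSq (cA n) * v.re := by
      rw [Complex.mul_re, Complex.ofReal_re, Complex.ofReal_im]; ring
    rw [hre2, normSq_cA]
    have hroot := root_re_le hn hv4 hv1
    have hca := cos_alpha_eq hn
    nlinarith
  | true =>
    have hq2' : ‖w * (starRingEnd ℂ) q.1 - cA n‖ = rN n := by simpa [rN] using hq2
    have hfac : w * (starRingEnd ℂ) q.1 - cA n
        = w * ((starRingEnd ℂ) q.1 - w⁻¹ * cA n) := by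
      rw [mul_sub, mul_inv_cancel_left₀ hw0]
    rw [hfac, norm_mul, hwabs, one_mul] at hq2'
    have hconjeq : (starRingEnd ℂ) q.1 - w⁻¹ * cA n
        = (starRingEnd ℂ) (q.1 - (starRingEnd ℂ) (w⁻¹ * cA n)) := by
      rw [map_sub, Complex.conj_conj]
    rw [hconjeq, Complex.norm_conj] at hq2'
    have hnsc' : normSq ((starRingEnd ℂ) (w⁻¹ * cA n)) = 1 + rN n ^ 2 := by
      rw [Complex.normSq_conj, Complex.normSq_mul, Complex.normSq_inv, hnsw, normSq_cA]
      norm_num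
    refine no_plane_point hn hu hqK.1 hζ1 hq2' hnsc' (fun hcc => ?_)
    set v := w⁻¹ * Complex.exp ((alphaN n : ℝ) * Complex.I) with hvdef
    have hexp4 : Complex.exp ((alphaN n : ℝ) * Complex.I) ^ (4 * n) = 1 := by
      rw [← Complex.exp_nat_mul]
      have harg : ((4 * n : ℕ) : ℂ) * ((alphaN n : ℝ) * Complex.I)
          = 2 * (Real.pi : ℂ) * Complex.I := by
        have hne : (n : ℂ) ≠ 0 := Nat.cast_ne_zero.mpr (by omega)
        rw [alphaN]; push_cast; field_simp; try ring
      rw [harg, Complex.exp_two_pi_mul_I]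
    have hv4 : v ^ (4 * n) = 1 := by
      rw [hvdef, mul_pow, inv_pow, hw4, inv_one, one_mul]
      exact hexp4
    have hsq := cA_sq hn
    have hv1 : v ≠ 1 := by
      intro h1
      apply hcc
      have hwexp : w = Complex.exp ((alphaN n : ℝ) * Complex.I) := by
        have h2 : w * (w⁻¹ * Complex.exp ((alphaN n : ℝ) * Complex.I)) = w * 1 := by
          rw [← hvdef, h1]
        rw [← mul_assoc, mul_inv_cancel₀ hw0, one_mul, mul_one] at h2
        exact h2.symm
      have hconjw : (starRingEnd ℂ) w⁻¹ = Complex.exp ((alphaN n : ℝ) * Complex.I) := by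
        rw [map_inv₀, hwexp, ← Complex.exp_conj]
        have hch : (starRingEnd ℂ) ((alphaN n : ℝ) * Complex.I)
            = -((alphaN n : ℝ) * Complex.I) := by
          rw [map_mul, Complex.conj_ofReal, Complex.conj_I]; ring
        rw [hch, Complex.exp_neg, inv_inv]
      rw [map_mul, hconjw]
      apply mul_left_cancel₀ hcA0
      rw [show cA n * (Complex.exp ((alphaN n : ℝ) * Complex.I) * (starRingEnd ℂ) (cA n))
          = (cA n * (starRingEnd ℂ) (cA n)) * Complex.exp ((alphaN n : ℝ) * Complex.I) by ring,
        Complex.mul_conj, normSq_cA]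
      rw [show cA n * cA n = (cA n) ^ 2 by ring, hsq]
    have heq : cA n * (starRingEnd ℂ) ((starRingEnd ℂ) (w⁻¹ * cA n))
        = v * ((1 + rN n ^ 2 : ℝ) : ℂ) := by
      rw [Complex.conj_conj,
        show cA n * (w⁻¹ * cA n) = w⁻¹ * (cA n) ^ 2 by ring, hsq, hvdef]
      ring
    rw [heq]
    have hre2 : (v * ((1 + rN n ^ 2 : ℝ) : ℂ)).re = (1 + rN n ^ 2) * v.re := by
      rw [Complex.mul_re, Complex.ofReal_re, Complex.ofReal_im]; ring
    rw [hre2]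
    have hroot := root_re_le hn hv4 hv1
    have hca := cos_alpha_eq hn
    nlinarith

/-- The vertical plane over `γ` lies in the closure of `Σ(u)`. -/
lemma plane_sub_closure (hn : 1 ≤ n) {h : ℝ} (hh : 0 < h) {u : ℂ → ℝ}
    (hu : FundamentalPiece n h u) :
    planeN n ⊆ closure (SigmaSet n h u) := by
  rintro ⟨ζ, t⟩ hp
  have hγ : ζ ∈ gammaN n := hp
  obtain ⟨hζ1, hζc0⟩ := hγ
  have hζc : ‖ζ - cA n‖ = rN n := hζc0
  have hr := rN_pos hn
  rw [Metric.mem_closure_iff]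
  intro ε hε
  have hRe : ‖ζ‖ < (ζ * (starRingEnd ℂ) (cA n)).re := gamma_re ⟨hζ1, hζc0⟩
  -- the path  F s = c + (1+s)(ζ - c)
  set F : ℝ → ℂ := fun s => cA n + ((1 + s : ℝ) : ℂ) * (ζ - cA n) with hFdef
  have hFcont : Continuous F := by
    apply continuous_const.add
    exact (Complex.continuous_ofReal.comp (continuous_const.add continuous_id)).mul
      continuous_const
  have hF0 : F 0 = ζ := by simp [hFdef]
  -- eventually all the good properties hold
  have hG : Continuous fun s => (F s * (starRingEnd ℂ) (cA n)).re - ‖F s‖ := by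
    apply Continuous.sub
    · exact Complex.continuous_re.comp (hFcont.mul continuous_const)
    · exact continuous_norm.comp hFcont
  have h1 : ∀ᶠ s in 𝓝 (0:ℝ),
      0 < (F s * (starRingEnd ℂ) (cA n)).re - ‖F s‖ := by
    apply (hG.tendsto 0).eventually
    apply lt_mem_nhds
    rw [hF0]
    linarith
  have h2 : ∀ᶠ s in 𝓝 (0:ℝ), ‖F s‖ < 1 := by
    have ht : Tendsto (fun s => ‖F s‖) (𝓝 0) (𝓝 (‖ζ‖)) := by
      have := (continuous_norm.comp hFcont).tendsto 0
      rwa [Function.comp_apply, hF0] at this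
    exact ht.eventually_lt_const hζ1
  have h3 : ∀ᶠ s in 𝓝 (0:ℝ), |s| * rN n < ε := by
    have hcont : Continuous fun s : ℝ => |s| * rN n :=
      continuous_abs.mul continuous_const
    have ht : Tendsto (fun s : ℝ => |s| * rN n) (𝓝 0) (𝓝 0) := by
      have := hcont.tendsto 0
      simpa using this
    exact ht.eventually_lt_const hε
  obtain ⟨δ0, hδ0, hδprop⟩ := Metric.eventually_nhds_iff.mp ((h1.and h2).and h3)
  set δ := δ0 / 2 with hδdef
  have hδpos : 0 < δ := by positivity
  have hgood : ∀ s ∈ Ioc 0 δ, F s ∈ OmegaN n ∧ ‖F s - ζ‖ < ε := by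
    intro s hs
    have hsd : dist s 0 < δ0 := by
      rw [Real.dist_eq, sub_zero, abs_of_pos hs.1]
      calc s ≤ δ := hs.2
        _ < δ0 := by rw [hδdef]; linarith
    obtain ⟨⟨hg1, hg2⟩, hg3⟩ := hδprop hsd
    have hFsζ : F s - ζ = (s : ℂ) * (ζ - cA n) := by
      rw [hFdef]; push_cast; ring
    have habsF : ‖F s - ζ‖ = |s| * rN n := by
      rw [hFsζ, norm_mul, Complex.norm_real, Real.norm_eq_abs, hζc]
    have harg := sector_back hn (by linarith : ‖F s‖ <
      (F s * (starRingEnd ℂ) (cA n)).re)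
    have hcirc : rN n < ‖F s - cA n‖ := by
      have hFc : F s - cA n = ((1 + s : ℝ) : ℂ) * (ζ - cA n) := by
        rw [hFdef]; ring
      rw [hFc, norm_mul, Complex.norm_real, Real.norm_eq_abs, hζc, abs_of_pos (by linarith [hs.1] : (0:ℝ) < 1 + s)]
      nlinarith [hs.1]
    exact ⟨⟨hg2, harg.1, harg.2, hcirc⟩, by rw [habsF]; exact hg3⟩
  -- the path tends to ζ within Ω
  have hmaps : MapsTo F (Ioc 0 δ) (OmegaN n) := fun s hs => (hgood s hs).1
  have hFt : Tendsto F (𝓝[Ioc 0 δ] 0) (𝓝[OmegaN n] ζ) := by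
    have := (hFcont.continuousWithinAt (s := Ioc 0 δ) (x := 0)).tendsto_nhdsWithin hmaps
    rwa [hF0] at this
  have hNe : (𝓝[Ioc 0 δ] (0:ℝ)).NeBot := by
    rw [← mem_closure_iff_nhdsWithin_neBot, closure_Ioc hδpos.ne]
    exact ⟨le_refl 0, hδpos.le⟩
  have hcomp : Tendsto (fun s => u (F s)) (𝓝[Ioc 0 δ] 0) atTop :=
    (hu.2.2.2 ζ ⟨hζ1, hζc0⟩).comp hFt
  -- choose the height
  have h2nh : (0:ℝ) < 2 * n * h := by
    have : (0:ℝ) < n := by exact_mod_cast hn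
    positivity
  obtain ⟨m, hm⟩ := exists_nat_ge ((u (F δ) - t) / (2 * n * h))
  have hv : u (F δ) ≤ t + 2 * n * h * m := by
    rw [div_le_iff₀ h2nh] at hm
    linarith
  obtain ⟨s₀, hs₀v, hs₀mem⟩ :=
    ((hcomp.eventually_gt_atTop (t + 2 * n * h * m)).and self_mem_nhdsWithin).exists
  -- intermediate value theorem
  have hs₀δ : s₀ ≤ δ := hs₀mem.2
  have hsub : uIcc s₀ δ ⊆ Ioc 0 δ := by
    rw [uIcc_of_le hs₀δ]
    exact fun x hx => ⟨lt_of_lt_of_le hs₀mem.1 hx.1, hx.2⟩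
  have hucont : ContinuousOn u (OmegaN n) := hu.1.1.continuousOn
  have hcontOn : ContinuousOn (fun s => u (F s)) (uIcc s₀ δ) :=
    hucont.comp hFcont.continuousOn (fun x hx => hmaps (hsub hx))
  have hvmem : t + 2 * n * h * m ∈ uIcc (u (F s₀)) (u (F δ)) := by
    rw [mem_uIcc]
    right
    exact ⟨hv, le_of_lt hs₀v⟩
  obtain ⟨s₁, hs₁mem, hs₁val⟩ := intermediate_value_uIcc hcontOn hvmem
  have hs₁ : s₁ ∈ Ioc 0 δ := hsub hs₁mem
  obtain ⟨hs₁Ω, hs₁ε⟩ := hgood s₁ hs₁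
  -- the group element
  have hgmem : ((TT n h)⁻¹) ^ m ∈ Ggrp (alphaN n) h :=
    pow_mem (inv_mem (TT_mem h)) m
  have hK : (F s₁, u (F s₁)) ∈ Kset n u :=
    ⟨subset_closure ⟨hs₁Ω, rfl⟩, hs₁Ω.1⟩
  have happ : (((TT n h)⁻¹) ^ m) (F s₁, u (F s₁)) = (F s₁, t) := by
    have hval : u (F s₁) = t + 2 * n * h * m := hs₁val
    rw [TTinv_pow_apply hn]
    ext
    · rfl
    · show u (F s₁) - 2 * n * h * m = t
      rw [hval]; ring
  refine ⟨(F s₁, t), ?_, ?_⟩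
  · rw [SigmaSet, mem_iUnion₂]
    exact ⟨((TT n h)⁻¹) ^ m, hgmem, (F s₁, u (F s₁)), hK, happ⟩
  · rw [Prod.dist_eq]
    rw [sup_lt_iff]
    constructor
    · rw [Complex.dist_eq, norm_sub_rev]
      exact hs₁ε
    · simpa using hε

/-- `γ` is nonempty. -/
lemma gamma_nonempty (hn : 1 ≤ n) : ∃ z : ℂ, z ∈ gammaN n := by
  have hr := rN_pos hn
  have habsc : ‖cA n‖ = Real.sqrt (1 + rN n ^ 2) := by
    rw [Complex.norm_def, normSq_cA]
  have hcpos : 0 < ‖cA n‖ := by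
    rw [habsc]
    exact Real.sqrt_pos.mpr (by nlinarith)
  have hrlt : rN n < ‖cA n‖ := by
    rw [habsc, Real.lt_sqrt hr.le]
    linarith
  refine ⟨cA n - ((rN n / ‖cA n‖ : ℝ) : ℂ) * cA n, ?_, ?_⟩
  · -- abs < 1
    have heq : cA n - ((rN n / ‖cA n‖ : ℝ) : ℂ) * cA n
        = ((1 - rN n / ‖cA n‖ : ℝ) : ℂ) * cA n := by
      push_cast; ring
    rw [heq, norm_mul, Complex.norm_real, Real.norm_eq_abs]
    have hfrac : rN n / ‖cA n‖ < 1 := (div_lt_one hcpos).mpr hrlt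
    have hfrac0 : 0 < rN n / ‖cA n‖ := div_pos hr hcpos
    rw [abs_of_pos (by linarith)]
    have hval : (1 - rN n / ‖cA n‖) * ‖cA n‖
        = ‖cA n‖ - rN n := by
      field_simp
    rw [hval, habsc]
    rw [sub_lt_iff_lt_add]
    rw [Real.sqrt_lt' (by linarith : (0:ℝ) < 1 + rN n)]
    nlinarith
  · -- on the circle
    have heq : cA n - ((rN n / ‖cA n‖ : ℝ) : ℂ) * cA n - cA n
        = -(((rN n / ‖cA n‖ : ℝ) : ℂ) * cA n) := by ring
    rw [heq, norm_neg, norm_mul, Complex.norm_real, Real.norm_eq_abs,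
      abs_of_pos (div_pos hr hcpos), div_mul_cancel₀ _ hcpos.ne']
    rfl

/-- the vertical plane `γ_α × ℝ` is contained in the closure of `Σ(u)` in
`𝔻 × ℝ` but disjoint from `Σ(u)`; in particular `Σ(u)` is not closed in `𝔻 × ℝ`, so the
helicoidal-Scherk example is not proper. -/
theorem helicoidalScherk_notProper (n : ℕ) (hn : 1 ≤ n) (h : ℝ) (hh : 0 < h)
    (u : ℂ → ℝ) (hu : FundamentalPiece n h u) :
    planeN n ⊆ closure (SigmaSet n h u) ∩ DR ∧
    Disjoint (planeN n) (SigmaSet n h u) ∧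
    closure (SigmaSet n h u) ∩ DR ≠ SigmaSet n h u := by
  have hplane_cl := plane_sub_closure hn hh hu
  have hdisj := disjoint_plane hn hu
  refine ⟨?_, hdisj, ?_⟩
  · intro p hp
    exact ⟨hplane_cl hp, hp.1⟩
  · intro heq
    obtain ⟨z₀, hz₀⟩ := gamma_nonempty hn
    have hmem : ((z₀ : ℂ), (0:ℝ)) ∈ planeN n := hz₀
    have h1 : ((z₀ : ℂ), (0:ℝ)) ∈ closure (SigmaSet n h u) ∩ DR :=
      ⟨hplane_cl hmem, hz₀.1⟩
    rw [heq] at h1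
    exact (Set.disjoint_left.mp hdisj hmem) h1
end
end
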